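/- Let 2 ≤ k < n ≤ m be integers and let F be a graph with a cut-edge e such that the two components of F − e are G = K_n and H = K_m. Then γ_{×k,t}(F_I) = k(n+m) + 1 if k is odd and n ≡ m+1 (mod 2), and γ_{×k,t}(F_I) = k(n+m) otherwise. -/

import Mathlib

open SimpleGraph

/-- The inflated graph `G_I` of a graph `G`: its vertices are the darts (oriented edges) of
`G`; the darts with first coordinate `x` form the clique `X_x` (of size `deg x`), and each
edge `xy` of `G` gives the "blue" edge between the dart `(x,y)` and its reverse `(y,x)`;
these blue edges form a perfect matching.  Equivalently, `inflation G` is the line graph of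
the subdivision of `G`. -/
def inflation {V : Type*} (G : SimpleGraph V) : SimpleGraph G.Dart :=
  SimpleGraph.fromRel (fun d₁ d₂ => d₁.toProd.1 = d₂.toProd.1 ∨ d₁.toProd = d₂.toProd.swap)

/-- `S` is a `k`-tuple total dominating set of `H`: every vertex has at least `k`
neighbours in `S`. -/
def IsKTDS {W : Type*} (H : SimpleGraph W) (k : ℕ) (S : Set W) : Prop :=
  ∀ v : W, k ≤ (S ∩ H.neighborSet v).ncard

/-- The `k`-tuple total domination number of `H`: the minimum cardinality of a `k`-tuple
total dominating set. -/
noncomputable def ktdn {W : Type*} (H : SimpleGraph W) (k : ℕ) : ℕ :=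
  sInf {n | ∃ S : Set W, IsKTDS H k S ∧ S.ncard = n}

/-- `H` is a 2-factor of `G`: a spanning 2-regular subgraph of `G`, i.e. a vertex-disjoint
union of cycles covering all vertices. -/
def IsTwoFactor {V : Type*} (G H : SimpleGraph V) : Prop :=
  H ≤ G ∧ ∀ v : V, (H.neighborSet v).ncard = 2

/-- `G` is a `k`-Hamiltonian-like decomposable graph (kHLD-graph): `G` contains `k`
pairwise edge-disjoint 2-factors. -/
def IsKHLD {V : Type*} (G : SimpleGraph V) (k : ℕ) : Prop :=
  ∃ F : Fin k → SimpleGraph V, (∀ i, IsTwoFactor G (F i)) ∧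
    ∀ i j, i ≠ j → Disjoint (F i) (F j)

/-- `M` is a perfect matching of `G`, viewed as a 1-regular spanning subgraph. -/
def IsPerfectMatchingGraph {V : Type*} (G M : SimpleGraph V) : Prop :=
  M ≤ G ∧ ∀ v : V, (M.neighborSet v).ncard = 1

/-- `M` is a matching of `G`: a subgraph of maximum degree at most 1. -/
def IsMatchingGraph {V : Type*} (G M : SimpleGraph V) : Prop :=
  M ≤ G ∧ ∀ v : V, (M.neighborSet v).ncard ≤ 1

/-- `G` is a kHLPM-graph: `G` contains `k` pairwise edge-disjoint 2-factors together with
a perfect matching edge-disjoint from each of these 2-factors. -/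
def IsKHLPM {V : Type*} (G : SimpleGraph V) (k : ℕ) : Prop :=
  ∃ (F : Fin k → SimpleGraph V) (M : SimpleGraph V),
    (∀ i, IsTwoFactor G (F i)) ∧ (∀ i j, i ≠ j → Disjoint (F i) (F j)) ∧
    IsPerfectMatchingGraph G M ∧ ∀ i, Disjoint M (F i)

/-- `G` is a kHLMM-graph: `G` contains `k` pairwise edge-disjoint 2-factors together with
a matching of size `⌊n/2⌋` edge-disjoint from each of these 2-factors. -/
def IsKHLMM {V : Type*} [Fintype V] (G : SimpleGraph V) (k : ℕ) : Prop :=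
  ∃ (F : Fin k → SimpleGraph V) (M : SimpleGraph V),
    (∀ i, IsTwoFactor G (F i)) ∧ (∀ i j, i ≠ j → Disjoint (F i) (F j)) ∧
    IsMatchingGraph G M ∧ M.edgeSet.ncard = Fintype.card V / 2 ∧ ∀ i, Disjoint M (F i)

/-- The graph `F` on `V ⊕ W` obtained from the disjoint union of `G` (on `V`) and `H`
(on `W`) by adding the single edge between `x : V` and `y : W`.  When `G` and `H` are
connected, this added edge is a cut-edge of `F` whose removal leaves exactly the two
components `G` and `H`. -/
def joinByEdge {V W : Type*} (G : SimpleGraph V) (H : SimpleGraph W) (x : V) (y : W) :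
    SimpleGraph (V ⊕ W) :=
  SimpleGraph.fromRel (fun a b =>
    match a, b with
    | Sum.inl u, Sum.inl v => G.Adj u v
    | Sum.inr u, Sum.inr v => H.Adj u v
    | Sum.inl u, Sum.inr v => u = x ∧ v = y
    | Sum.inr _, Sum.inl _ => False)

/-- The generalized Petersen graph `P(n,m)`: vertices `a_i` (the left copies) and `b_i`
(the right copies) for `i ∈ ZMod n`, with edges `a_i a_{i+1}`, `a_i b_i`, `b_i b_{i+m}`. -/
def genPetersen (n m : ℕ) : SimpleGraph (ZMod n ⊕ ZMod n) :=
  SimpleGraph.fromRel (fun a b =>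
    match a, b with
    | Sum.inl i, Sum.inl j => j = i + 1
    | Sum.inl i, Sum.inr j => j = i
    | Sum.inr i, Sum.inr j => j = i + (m : ZMod n)
    | Sum.inr _, Sum.inl _ => False)

/-- Cyclic distance between `i` and `j` on the cycle `ZMod n`. -/
def cycDist (n : ℕ) (i j : ZMod n) : ℕ := min (i - j).val (j - i).val

/-- The Harary graph `H_{m,n}` on `ZMod n`: each vertex is adjacent to the nearest `m/2`
vertices in each direction around the circle; if `m` is odd and `n` is even, each vertex
is also adjacent to the diametrically opposite vertex; if `m` and `n` are both odd, the
edges `(i, i + (n-1)/2)` for `0 ≤ i ≤ (n-1)/2` are added instead. -/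
def harary (m n : ℕ) : SimpleGraph (ZMod n) :=
  SimpleGraph.fromRel (fun i j =>
    (1 ≤ cycDist n i j ∧ cycDist n i j ≤ m / 2) ∨
    (m % 2 = 1 ∧ n % 2 = 0 ∧ j = i + ((n / 2 : ℕ) : ZMod n)) ∨
    (m % 2 = 1 ∧ n % 2 = 1 ∧ (∃ t : ℕ, t ≤ (n - 1) / 2 ∧ i = (t : ZMod n)) ∧
      j = i + (((n - 1) / 2 : ℕ) : ZMod n)))

/-- The graph obtained by gluing the graphs `G i` (on vertex types `V i`) at the
distinguished vertices `x i`, which are all identified to the single vertex `none`.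
The `v`-components of the resulting graph at the cut-vertex `v = none` are exactly
(canonical copies of) the graphs `G i`. -/
def wedgeAt {m : ℕ} {V : Fin m → Type*} (G : ∀ i, SimpleGraph (V i)) (x : ∀ i, V i) :
    SimpleGraph (Option (Σ i : Fin m, {u : V i // u ≠ x i})) :=
  SimpleGraph.fromRel (fun a b =>
    match a, b with
    | none, some ⟨i, u⟩ => (G i).Adj (x i) u.val
    | some ⟨i, u⟩, some ⟨j, w⟩ => ∃ h : i = j, (G j).Adj (cast (congrArg V h) u.val) w.val
    | _, _ => False)

/-!
In the inflation, a dart `(v, w)` is adjacent to the other darts at `v` and to its reverse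
`(w, v)`. Hence for `k ≥ 2` a `k`-tuple total dominating set `S` contains at least `k` darts at
every vertex, so `|S| ≥ k |V|`; in case of equality no dart of `S` can miss its reverse, so `|S|`
is even. Conversely, the darts of a spanning subgraph of minimum degree at least `k` form such a
set, of size its degree sum. For `K_n` and `K_m` joined by a bridge, circulant graphs (plus a
matching of long chords when `k` and the order are both odd) give a spanning subgraph whose
degree sum is `k (n + m)` rounded up to an even number.
-/

section Inflation

variable {V : Type*} {G : SimpleGraph V}

lemma inflation_adj {d e : G.Dart} :
    (inflation G).Adj d e ↔ d ≠ e ∧ (d.fst = e.fst ∨ e = d.symm) := by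
  have hswap : d.toProd = e.toProd.swap ↔ e = d.symm := by
    rw [Dart.ext_iff, Dart.symm_toProd]
    exact ⟨fun h => by rw [h, Prod.swap_swap], fun h => by rw [h, Prod.swap_swap]⟩
  have hswap' : e.toProd = d.toProd.swap ↔ e = d.symm := by
    rw [Dart.ext_iff, Dart.symm_toProd]
  simp only [inflation, fromRel_adj, hswap, hswap', @eq_comm _ e.fst]
  tauto

lemma inter_neighborSet_inflation (S : Set G.Dart) (d : G.Dart) :
    S ∩ (inflation G).neighborSet d = ({e ∈ S | e.fst = d.fst} \ {d}) ∪ (S ∩ {d.symm}) := by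
  ext e
  simp only [Set.mem_inter_iff, mem_neighborSet, inflation_adj, Set.mem_union, Set.mem_sdiff,
    Set.mem_ofPred_eq, Set.mem_singleton_iff]
  constructor
  · rintro ⟨he, hne, h | rfl⟩
    exacts [Or.inl ⟨⟨he, h.symm⟩, Ne.symm hne⟩, Or.inr ⟨he, rfl⟩]
  · rintro (⟨⟨he, h⟩, hne⟩ | ⟨he, rfl⟩)
    exacts [⟨he, Ne.symm hne, Or.inl h.symm⟩, ⟨he, d.symm_ne.symm, Or.inr rfl⟩]

variable [Finite V]

instance : Finite G.Dart := Finite.of_injective _ Dart.toProd_injective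

lemma ncard_inter_neighborSet_inflation (S : Set G.Dart) (d : G.Dart) :
    (S ∩ (inflation G).neighborSet d).ncard =
      ({e ∈ S | e.fst = d.fst} \ {d}).ncard + (S ∩ {d.symm}).ncard := by
  rw [inter_neighborSet_inflation, Set.ncard_union_eq (Set.disjoint_left.mpr ?_)]
  rintro e ⟨⟨-, he⟩, -⟩ ⟨-, rfl⟩
  exact d.snd_ne_fst he

lemma le_ncard_dartFiber {k : ℕ} (hk : 2 ≤ k) {S : Set G.Dart} (hS : IsKTDS (inflation G) k S)
    {v w : V} (hvw : G.Adj v w) : k ≤ {d ∈ S | d.fst = v}.ncard := by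
  have hsymm : ∀ d : G.Dart, (S ∩ {d.symm}).ncard ≤ 1 := fun d =>
    (Set.ncard_inter_le_ncard_right _ _).trans (Set.ncard_singleton _).le
  rcases Set.eq_empty_or_nonempty {d ∈ S | d.fst = v} with hA | ⟨d, hd⟩
  · have h := hS ⟨(v, w), hvw⟩
    rw [ncard_inter_neighborSet_inflation] at h
    have := hsymm ⟨(v, w), hvw⟩
    rw [hA, Set.empty_sdiff, Set.ncard_empty] at h
    omega
  · have h := hS d
    rw [ncard_inter_neighborSet_inflation, hd.2, Set.ncard_sdiff_singleton_of_mem hd] at h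
    have := hsymm d
    omega

lemma symm_mem_of_ncard_dartFiber_eq {k : ℕ} {S : Set G.Dart} (hS : IsKTDS (inflation G) k S)
    {d : G.Dart} (hd : d ∈ S) (h : {e ∈ S | e.fst = d.fst}.ncard = k) : d.symm ∈ S := by
  by_contra hds
  have hpos : 0 < k := h ▸ (Set.ncard_pos (Set.toFinite _)).mpr ⟨d, hd, rfl⟩
  have := hS d
  rw [ncard_inter_neighborSet_inflation,
    Set.ncard_sdiff_singleton_of_mem (show d ∈ {e ∈ S | e.fst = d.fst} from ⟨hd, rfl⟩), h,
    Set.inter_singleton_eq_empty.mpr hds, Set.ncard_empty] at this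
  omega

end Inflation

section DartSets

variable {V : Type*} {G H : SimpleGraph V}

lemma ncard_dartFiber_setOf_adj [Finite V] (hH : H ≤ G) (v : V) :
    {d ∈ {d : G.Dart | H.Adj d.fst d.snd} | d.fst = v}.ncard = (H.neighborSet v).ncard := by
  have himage : (fun d : G.Dart => d.snd) '' {d ∈ {d : G.Dart | H.Adj d.fst d.snd} | d.fst = v} =
      H.neighborSet v := by
    ext w
    constructor
    · rintro ⟨d, ⟨hd, rfl⟩, rfl⟩
      exact hd
    · intro hw
      exact ⟨⟨(v, w), hH hw⟩, ⟨hw, rfl⟩, rfl⟩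
  rw [← himage, Set.InjOn.ncard_image]
  rintro d₁ ⟨-, h₁⟩ d₂ ⟨-, h₂⟩ h
  exact Dart.ext _ _ (Prod.ext (h₁.trans h₂.symm) h)

variable [Fintype V]

lemma ncard_eq_sum_ncard_dartFiber (S : Set G.Dart) :
    S.ncard = ∑ v, {d ∈ S | d.fst = v}.ncard := by
  classical
  have : Fintype G.Dart := Fintype.ofFinite _
  rw [Set.ncard_eq_toFinset_card',
    Finset.card_eq_sum_card_fiberwise (f := fun d : G.Dart => d.fst) (t := Finset.univ)
      (fun _ _ => Finset.mem_univ _)]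
  refine Finset.sum_congr rfl fun v _ => ?_
  rw [Set.ncard_eq_toFinset_card']
  congr 1
  ext d
  simp

lemma ncard_setOf_adj (hH : H ≤ G) :
    {d : G.Dart | H.Adj d.fst d.snd}.ncard = ∑ v, (H.neighborSet v).ncard := by
  rw [ncard_eq_sum_ncard_dartFiber]
  exact Finset.sum_congr rfl fun v _ => ncard_dartFiber_setOf_adj hH v

lemma isKTDS_setOf_adj {k : ℕ} (hH : H ≤ G) (hdeg : ∀ v, k ≤ (H.neighborSet v).ncard) :
    IsKTDS (inflation G) k {d : G.Dart | H.Adj d.fst d.snd} := by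
  intro d
  have hfib := hdeg d.fst
  rw [← ncard_dartFiber_setOf_adj hH] at hfib
  rw [ncard_inter_neighborSet_inflation]
  by_cases hd : H.Adj d.fst d.snd
  · have hsymm : d.symm ∈ {d : G.Dart | H.Adj d.fst d.snd} := hd.symm
    rw [Set.ncard_sdiff_singleton_of_mem (show d ∈ {e ∈ _ | e.fst = d.fst} from ⟨hd, rfl⟩),
      Set.inter_singleton_of_mem hsymm, Set.ncard_singleton]
    omega
  · rw [Set.sdiff_singleton_eq_self fun h => hd h.1]
    omega

/-- Such a set is the dart set of a subgraph, so its size is twice that subgraph's edge count. -/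
lemma even_ncard_of_symm_mem {S : Set G.Dart} (hS : ∀ d ∈ S, d.symm ∈ S) : Even S.ncard := by
  classical
  set H := fromEdgeSet (Dart.edge '' S)
  have hHG : H ≤ G := fun a b h => by
    obtain ⟨⟨d, -, hd⟩, -⟩ := (fromEdgeSet_adj _).mp h
    exact (G.mem_edgeSet).mp (hd ▸ d.edge_mem)
  have hSH : S = {d : G.Dart | H.Adj d.fst d.snd} := by
    ext d
    refine ⟨fun hd => (fromEdgeSet_adj _).mpr ⟨⟨d, hd, rfl⟩, d.fst_ne_snd⟩, fun h => ?_⟩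
    obtain ⟨⟨e, he, hed⟩, -⟩ := (fromEdgeSet_adj _).mp h
    rcases (dart_edge_eq_iff e d).mp hed with rfl | rfl
    exacts [he, hS _ he]
  rw [hSH, ncard_setOf_adj hHG]
  have hdeg : ∀ v, (H.neighborSet v).ncard = H.degree v := fun v => by
    rw [Set.ncard_eq_toFinset_card', ← card_neighborSet_eq_degree, Set.toFinset_card]
  simp only [hdeg, sum_degrees_eq_twice_card_edges, even_two_mul]

end DartSets

lemma ktdn_eq_of_isKTDS {W : Type*} {H : SimpleGraph W} {k : ℕ} {S : Set W} (hS : IsKTDS H k S)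
    (hmin : ∀ T, IsKTDS H k T → S.ncard ≤ T.ncard) : ktdn H k = S.ncard :=
  le_antisymm (Nat.sInf_le ⟨S, hS, rfl⟩)
    (le_csInf ⟨_, S, hS, rfl⟩ fun _ ⟨T, hT, hTn⟩ => hTn ▸ hmin T hT)

section LowerBound

variable {V : Type*} [Fintype V] {G : SimpleGraph V} {k : ℕ}

theorem le_ncard_of_isKTDS (hk : 2 ≤ k) (hG : ∀ v, ∃ w, G.Adj v w) {S : Set G.Dart}
    (hS : IsKTDS (inflation G) k S) :
    k * Fintype.card V + k * Fintype.card V % 2 ≤ S.ncard := by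
  have hfib : ∀ v ∈ Finset.univ, k ≤ {d ∈ S | d.fst = v}.ncard := fun v _ =>
    le_ncard_dartFiber hk hS (hG v).choose_spec
  have hsum : ∑ _v : V, k = k * Fintype.card V := by
    rw [Finset.sum_const, Finset.card_univ, smul_eq_mul, mul_comm]
  have hle : k * Fintype.card V ≤ S.ncard := by
    rw [← hsum, ncard_eq_sum_ncard_dartFiber S]
    exact Finset.sum_le_sum hfib
  by_contra! hlt
  have heq : ∑ _v : V, k = ∑ v, {d ∈ S | d.fst = v}.ncard := by
    rw [hsum, ← ncard_eq_sum_ncard_dartFiber]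
    omega
  have hexact := (Finset.sum_eq_sum_iff_of_le hfib).mp heq
  have hclosed : ∀ d ∈ S, d.symm ∈ S := fun d hd =>
    symm_mem_of_ncard_dartFiber_eq hS hd (hexact d.fst (Finset.mem_univ _)).symm
  obtain ⟨c, hc⟩ := even_ncard_of_symm_mem hclosed
  omega

theorem ktdn_inflation_eq (hk : 2 ≤ k) (hG : ∀ v, ∃ w, G.Adj v w) {H : SimpleGraph V}
    (hH : H ≤ G) (hdeg : ∀ v, k ≤ (H.neighborSet v).ncard)
    (hsum : ∑ v, (H.neighborSet v).ncard = k * Fintype.card V + k * Fintype.card V % 2) :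
    ktdn (inflation G) k = k * Fintype.card V + k * Fintype.card V % 2 := by
  rw [← hsum, ← ncard_setOf_adj hH]
  refine ktdn_eq_of_isKTDS (isKTDS_setOf_adj hH hdeg) fun T hT => ?_
  rw [ncard_setOf_adj hH, hsum]
  exact le_ncard_of_isKTDS hk hG hT

end LowerBound

section JoinByEdge

variable {V W : Type*} {G G' : SimpleGraph V} {H H' : SimpleGraph W} {x : V} {y : W}

@[simp] lemma joinByEdge_adj_inl_inl {u v : V} :
    (joinByEdge G H x y).Adj (.inl u) (.inl v) ↔ G.Adj u v := by
  simp only [joinByEdge, fromRel_adj, ne_eq, Sum.inl.injEq]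
  exact ⟨fun ⟨_, h⟩ => h.elim id fun h => h.symm, fun h => ⟨G.ne_of_adj h, Or.inl h⟩⟩

@[simp] lemma joinByEdge_adj_inr_inr {u v : W} :
    (joinByEdge G H x y).Adj (.inr u) (.inr v) ↔ H.Adj u v := by
  simp only [joinByEdge, fromRel_adj, ne_eq, Sum.inr.injEq]
  exact ⟨fun ⟨_, h⟩ => h.elim id fun h => h.symm, fun h => ⟨H.ne_of_adj h, Or.inl h⟩⟩

@[simp] lemma joinByEdge_adj_inl_inr {u : V} {w : W} :
    (joinByEdge G H x y).Adj (.inl u) (.inr w) ↔ u = x ∧ w = y := by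
  simp [joinByEdge, fromRel_adj]

@[simp] lemma joinByEdge_adj_inr_inl {u : V} {w : W} :
    (joinByEdge G H x y).Adj (.inr w) (.inl u) ↔ u = x ∧ w = y := by
  simp [joinByEdge, fromRel_adj]

lemma joinByEdge_mono (hG : G ≤ G') (hH : H ≤ H') :
    joinByEdge G H x y ≤ joinByEdge G' H' x y := by
  rintro (u | u) (v | v) h <;> simp only [joinByEdge_adj_inl_inl, joinByEdge_adj_inr_inr,
    joinByEdge_adj_inl_inr, joinByEdge_adj_inr_inl] at h ⊢
  exacts [hG h, h, h, hH h]

lemma sum_le_joinByEdge (hG : G ≤ G') (hH : H ≤ H') : G ⊕g H ≤ joinByEdge G' H' x y := by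
  rintro (u | u) (v | v) h
  · exact joinByEdge_adj_inl_inl.mpr (hG (sum_adj_inl.mp h))
  · simp at h
  · simp at h
  · exact joinByEdge_adj_inr_inr.mpr (hH (sum_adj_inr.mp h))

lemma exists_adj_joinByEdge_top [Nontrivial V] [Nontrivial W] (u : V ⊕ W) :
    ∃ w, (joinByEdge (⊤ : SimpleGraph V) (⊤ : SimpleGraph W) x y).Adj u w := by
  rcases u with u | u
  · obtain ⟨v, hv⟩ := exists_ne u
    exact ⟨.inl v, by simpa using hv.symm⟩
  · obtain ⟨v, hv⟩ := exists_ne u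
    exact ⟨.inr v, by simpa using hv.symm⟩

lemma ncard_image_inl_union_image_inr [Finite V] [Finite W] (s : Set V) (t : Set W) :
    (Sum.inl '' s ∪ Sum.inr '' t).ncard = s.ncard + t.ncard := by
  rw [Set.ncard_union_eq Set.disjoint_image_inl_image_inr,
    Set.ncard_image_of_injective _ Sum.inl_injective,
    Set.ncard_image_of_injective _ Sum.inr_injective]

lemma ncard_neighborSet_sum_inl (v : V) :
    ((G ⊕g H).neighborSet (.inl v)).ncard = (G.neighborSet v).ncard := by
  rw [neighborSet_sum_inl, Set.ncard_image_of_injective _ Sum.inl_injective]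

lemma ncard_neighborSet_sum_inr (w : W) :
    ((G ⊕g H).neighborSet (.inr w)).ncard = (H.neighborSet w).ncard := by
  rw [neighborSet_sum_inr, Set.ncard_image_of_injective _ Sum.inr_injective]

lemma ncard_neighborSet_joinByEdge_inl [Finite V] [Finite W] [DecidableEq V] (v : V) :
    ((joinByEdge G H x y).neighborSet (.inl v)).ncard =
      (G.neighborSet v).ncard + if v = x then 1 else 0 := by
  have : (joinByEdge G H x y).neighborSet (.inl v) =
      Sum.inl '' G.neighborSet v ∪ Sum.inr '' (if v = x then {y} else ∅) := by
    ext (u | u) <;> split_ifs <;> simp_all [eq_comm]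
  rw [this, ncard_image_inl_union_image_inr]
  split_ifs <;> simp

lemma ncard_neighborSet_joinByEdge_inr [Finite V] [Finite W] [DecidableEq W] (w : W) :
    ((joinByEdge G H x y).neighborSet (.inr w)).ncard =
      (H.neighborSet w).ncard + if w = y then 1 else 0 := by
  have : (joinByEdge G H x y).neighborSet (.inr w) =
      Sum.inl '' (if w = y then {x} else ∅) ∪ Sum.inr '' H.neighborSet w := by
    ext (u | u) <;> split_ifs <;> simp_all [eq_comm]
  rw [this, ncard_image_inl_union_image_inr, add_comm]
  split_ifs <;> simp

lemma sum_ncard_neighborSet_joinByEdge [Fintype V] [Fintype W] [DecidableEq V] [DecidableEq W] :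
    ∑ u, ((joinByEdge G H x y).neighborSet u).ncard =
      ∑ v, (G.neighborSet v).ncard + ∑ w, (H.neighborSet w).ncard + 2 := by
  simp only [Fintype.sum_sum_type, ncard_neighborSet_joinByEdge_inl,
    ncard_neighborSet_joinByEdge_inr, Finset.sum_add_distrib, Finset.sum_ite_eq',
    Finset.mem_univ, if_true]
  ring

lemma sum_ncard_neighborSet_sum [Fintype V] [Fintype W] :
    ∑ u, ((G ⊕g H).neighborSet u).ncard =
      ∑ v, (G.neighborSet v).ncard + ∑ w, (H.neighborSet w).ncard := by
  simp only [Fintype.sum_sum_type, ncard_neighborSet_sum_inl, ncard_neighborSet_sum_inr]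

end JoinByEdge

section Circulant

variable {A : Type*} [AddGroup A] {s : Set A}

lemma circulantGraph_adj_iff (h0 : (0 : A) ∉ s) (hneg : ∀ d ∈ s, -d ∈ s) {u v : A} :
    (circulantGraph s).Adj u v ↔ v - u ∈ s := by
  rw [circulantGraph_adj]
  refine ⟨fun ⟨_, h⟩ => h.elim (fun h => neg_sub u v ▸ hneg _ h) id, fun h => ⟨?_, Or.inr h⟩⟩
  rintro rfl
  exact h0 (sub_self u ▸ h)

lemma ncard_neighborSet_circulantGraph (h0 : (0 : A) ∉ s) (hneg : ∀ d ∈ s, -d ∈ s) (u : A) :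
    ((circulantGraph s).neighborSet u).ncard = s.ncard := by
  have : (circulantGraph s).neighborSet u = (· + u) '' s := by
    ext v
    rw [mem_neighborSet, circulantGraph_adj_iff h0 hneg]
    exact ⟨fun h => ⟨v - u, h, sub_add_cancel v u⟩, by rintro ⟨d, hd, rfl⟩; simpa using hd⟩
  rw [this, Set.ncard_image_of_injective _ (add_left_injective u)]

end Circulant

/-- The jumps `±1, …, ±⌊k/2⌋`, together with `N/2` when `k` is odd and `N` even. -/
def circulantJumps (N k : ℕ) : Set (Fin N) :=
  {d | 0 < d.val ∧ (2 * d.val ≤ k ∨ 2 * (N - d.val) ≤ k ∨ (k % 2 = 1 ∧ 2 * d.val = N))}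

section CirculantJumps

variable {N k : ℕ}

lemma zero_notMem_circulantJumps [NeZero N] : (0 : Fin N) ∉ circulantJumps N k := by
  simp [circulantJumps]

lemma neg_mem_circulantJumps [NeZero N] {d : Fin N} (hd : d ∈ circulantJumps N k) :
    -d ∈ circulantJumps N k := by
  have hne : d ≠ 0 := Fin.pos_iff_ne_zero.mp hd.1
  simp only [circulantJumps, Set.mem_ofPred_eq, Fin.val_neg, if_neg hne] at hd ⊢
  have := d.isLt
  omega

lemma ncard_circulantJumps (hk : k < N) :
    (circulantJumps N k).ncard + (if k % 2 = 1 ∧ N % 2 = 1 then 1 else 0) = k := by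
  have himage : Fin.val '' circulantJumps N k =
      ↑(Finset.Icc 1 (k / 2) ∪ Finset.Ico (N - k / 2) N ∪
        (Finset.range N).filter (fun v => k % 2 = 1 ∧ 2 * v = N)) := by
    ext v
    simp only [circulantJumps, Set.mem_image, Set.mem_ofPred_eq, Finset.coe_union,
      Finset.coe_filter, Set.mem_union, Finset.mem_coe, Finset.mem_Icc, Finset.mem_Ico,
      Finset.mem_range]
    constructor
    · rintro ⟨d, hd, rfl⟩
      have := d.isLt
      omega
    · intro h
      exact ⟨⟨v, by omega⟩, by simp only; omega, rfl⟩
  have hmid : ((Finset.range N).filter (fun v => k % 2 = 1 ∧ 2 * v = N)).card =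
      if k % 2 = 1 ∧ N % 2 = 0 then 1 else 0 := by
    split_ifs with hc
    · rw [Finset.card_eq_one]
      exact ⟨N / 2, by ext v; simp only [Finset.mem_filter, Finset.mem_range,
        Finset.mem_singleton]; omega⟩
    · rw [Finset.card_eq_zero, Finset.filter_eq_empty_iff]
      intro v _
      omega
  rw [← Set.ncard_image_of_injective _ Fin.val_injective, himage, Set.ncard_coe_finset,
    Finset.card_union_of_disjoint, Finset.card_union_of_disjoint, Nat.card_Icc, Nat.card_Ico,
    hmid]
  · split_ifs <;> omega
  · rw [Finset.disjoint_left]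
    intro v hv
    simp only [Finset.mem_Icc, Finset.mem_Ico] at hv ⊢
    omega
  · rw [Finset.disjoint_left]
    intro v hv
    simp only [Finset.mem_union, Finset.mem_Icc, Finset.mem_Ico, Finset.mem_filter,
      Finset.mem_range] at hv ⊢
    omega

end CirculantJumps

/-- The chords `{a, a + ⌊N/2⌋}` with `1 ≤ a ≤ ⌊N/2⌋`; for odd `N` they match up all nonzero
vertices of `Fin N`. -/
def chordMatching (N : ℕ) : SimpleGraph (Fin N) :=
  fromRel fun a b => 0 < a.val ∧ b.val = a.val + N / 2

section ChordMatching

variable {N k : ℕ}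

lemma chordMatching_adj {a b : Fin N} :
    (chordMatching N).Adj a b ↔
      (0 < a.val ∧ b.val = a.val + N / 2) ∨ (0 < b.val ∧ a.val = b.val + N / 2) := by
  rw [chordMatching, fromRel_adj]
  refine ⟨And.right, fun h => ⟨fun hab => ?_, h⟩⟩
  subst hab
  omega

lemma ncard_neighborSet_chordMatching (hN : N % 2 = 1) (a : Fin N) :
    ((chordMatching N).neighborSet a).ncard = if a.val = 0 then 0 else 1 := by
  split_ifs with ha
  · rw [Set.ncard_eq_zero]
    ext b
    simp only [mem_neighborSet, chordMatching_adj, Set.mem_empty_iff_false, iff_false]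
    omega
  · rw [Set.ncard_eq_one]
    refine ⟨⟨if a.val ≤ N / 2 then a.val + N / 2 else a.val - N / 2, by split_ifs <;> omega⟩, ?_⟩
    ext b
    simp only [mem_neighborSet, chordMatching_adj, Set.mem_singleton_iff, Fin.ext_iff]
    have := b.isLt
    split_ifs <;> omega

lemma disjoint_circulantGraph_chordMatching [NeZero N] (hk : k < N) (hodd : k % 2 = 1)
    (hN : N % 2 = 1) : Disjoint (circulantGraph (circulantJumps N k)) (chordMatching N) := by
  have hhalf : ∀ {a b : Fin N}, b.val = a.val + N / 2 → b - a ∉ circulantJumps N k := by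
    intro a b hab hmem
    have hval : (b - a).val = N / 2 := by rw [Fin.coe_sub_iff_le.mpr (by omega)]; omega
    simp only [circulantJumps, Set.mem_ofPred_eq, hval] at hmem
    omega
  rw [disjoint_iff_inf_le]
  rintro a b ⟨hcirc, hchord⟩
  rw [circulantGraph_adj_iff zero_notMem_circulantJumps fun _ => neg_mem_circulantJumps]
    at hcirc
  rcases chordMatching_adj.mp hchord with ⟨-, h⟩ | ⟨-, h⟩
  · exact hhalf h hcirc
  · exact hhalf h (neg_sub b a ▸ neg_mem_circulantJumps hcirc)

end ChordMatching

lemma ncard_neighborSet_sup_of_disjoint {V : Type*} [Finite V] {G H : SimpleGraph V}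
    (h : Disjoint G H) (v : V) :
    ((G ⊔ H).neighborSet v).ncard = (G.neighborSet v).ncard + (H.neighborSet v).ncard := by
  rw [neighborSet_sup, Set.ncard_union_eq (disjoint_neighborSet.mpr h v)]

lemma ncard_neighborSet_comap_equiv {V W : Type*} (e : V ≃ W) (H : SimpleGraph W) (v : V) :
    ((H.comap e).neighborSet v).ncard = (H.neighborSet (e v)).ncard :=
  Set.ncard_preimage_of_injective_subset_range e.injective (e.range_eq_univ ▸ Set.subset_univ _)

lemma exists_ncard_neighborSet_add_eq_fin {N k : ℕ} [NeZero N] (hk : k < N) :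
    ∃ H : SimpleGraph (Fin N),
      ∀ a, (H.neighborSet a).ncard + (if a = 0 then k * N % 2 else 0) = k := by
  have hjumps := ncard_circulantJumps hk
  have hcirc := ncard_neighborSet_circulantGraph (s := circulantJumps N k)
    zero_notMem_circulantJumps fun _ => neg_mem_circulantJumps
  have hkN : k * N % 2 = if k % 2 = 1 ∧ N % 2 = 1 then 1 else 0 := by
    rw [Nat.mul_mod]
    rcases Nat.mod_two_eq_zero_or_one k with h | h <;>
      rcases Nat.mod_two_eq_zero_or_one N with h' | h' <;> simp [h, h']
  by_cases hodd : k % 2 = 1 ∧ N % 2 = 1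
  · refine ⟨circulantGraph (circulantJumps N k) ⊔ chordMatching N, fun a => ?_⟩
    rw [ncard_neighborSet_sup_of_disjoint
      (disjoint_circulantGraph_chordMatching hk hodd.1 hodd.2), hcirc,
      ncard_neighborSet_chordMatching hodd.2, hkN, if_pos hodd]
    rw [if_pos hodd] at hjumps
    simp only [Fin.val_eq_zero_iff]
    split_ifs <;> omega
  · refine ⟨circulantGraph (circulantJumps N k), fun a => ?_⟩
    rw [hcirc, hkN, if_neg hodd]
    rw [if_neg hodd] at hjumps
    simpa using hjumps

theorem exists_ncard_neighborSet_add_eq {V : Type*} [Fintype V] [DecidableEq V] {k : ℕ}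
    (hk : k < Fintype.card V) (z : V) :
    ∃ H : SimpleGraph V,
      ∀ v, (H.neighborSet v).ncard + (if v = z then k * Fintype.card V % 2 else 0) = k := by
  have : NeZero (Fintype.card V) := ⟨by omega⟩
  obtain ⟨H, hH⟩ := exists_ncard_neighborSet_add_eq_fin hk
  set f := Fintype.equivFin V
  set e := f.trans (Equiv.swap (f z) 0)
  have he : ∀ v, e v = 0 ↔ v = z := fun v => by
    simp [e, Equiv.swap_apply_eq_iff, f.injective.eq_iff]
  refine ⟨H.comap e, fun v => ?_⟩
  simpa only [ncard_neighborSet_comap_equiv, he] using hH (e v)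

lemma sum_add_eq_of_add_ite_eq {V : Type*} [Fintype V] [DecidableEq V] {f : V → ℕ} {z : V}
    {c k : ℕ} (h : ∀ v, f v + (if v = z then c else 0) = k) :
    ∑ v, f v + c = k * Fintype.card V := by
  have := Finset.sum_congr rfl fun v (_ : v ∈ Finset.univ) => h v
  rwa [Finset.sum_add_distrib, Finset.sum_ite_eq', if_pos (Finset.mem_univ _), Finset.sum_const,
    Finset.card_univ, smul_eq_mul, mul_comm] at this

/-- Near-regular graphs on the two sides, joined by the bridge exactly when one of them has a
vertex of degree `k - 1`. -/
theorem exists_le_joinByEdge_top {V W : Type*} [Fintype V] [Fintype W] [DecidableEq V]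
    [DecidableEq W] {k : ℕ} (hkV : k < Fintype.card V) (hkW : k < Fintype.card W) (x : V)
    (y : W) :
    ∃ H ≤ joinByEdge (⊤ : SimpleGraph V) (⊤ : SimpleGraph W) x y,
      (∀ u, k ≤ (H.neighborSet u).ncard) ∧
      ∑ u, (H.neighborSet u).ncard = k * Fintype.card (V ⊕ W) + k * Fintype.card (V ⊕ W) % 2 := by
  obtain ⟨HL, hL⟩ := exists_ncard_neighborSet_add_eq hkV x
  obtain ⟨HR, hR⟩ := exists_ncard_neighborSet_add_eq hkW y
  have hsumL := sum_add_eq_of_add_ite_eq hL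
  have hsumR := sum_add_eq_of_add_ite_eq hR
  rw [Fintype.card_sum, mul_add]
  by_cases heven : k * Fintype.card V % 2 = 0 ∧ k * Fintype.card W % 2 = 0
  · refine ⟨HL ⊕g HR, sum_le_joinByEdge le_top le_top, ?_, ?_⟩
    · rintro (v | w)
      · have := hL v
        rw [ncard_neighborSet_sum_inl]
        split_ifs at this <;> omega
      · have := hR w
        rw [ncard_neighborSet_sum_inr]
        split_ifs at this <;> omega
    · rw [sum_ncard_neighborSet_sum]
      omega
  · refine ⟨joinByEdge HL HR x y, joinByEdge_mono le_top le_top, ?_, ?_⟩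
    · rintro (v | w)
      · have := hL v
        rw [ncard_neighborSet_joinByEdge_inl]
        split_ifs at this ⊢ <;> omega
      · have := hR w
        rw [ncard_neighborSet_joinByEdge_inr]
        split_ifs at this ⊢ <;> omega
    · rw [sum_ncard_neighborSet_joinByEdge]
      omega

/-- **Proposition (two complete graphs joined by a cut-edge).** Let `2 ≤ k < n ≤ m` and let
`F` be obtained from the disjoint union of `K_n` and `K_m` by adding a cut-edge. Then
`γ_{×k,t}(F_I) = k(n+m) + 1` if `k` is odd and `n ≡ m + 1 (mod 2)`, and `= k(n+m)`
otherwise. -/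
theorem stmt11 (n m k : ℕ) (hk : 2 ≤ k) (hkn : k < n) (hnm : n ≤ m)
    (x : Fin n) (y : Fin m) :
    (Odd k ∧ n % 2 = (m + 1) % 2 →
      ktdn (inflation (joinByEdge (⊤ : SimpleGraph (Fin n)) (⊤ : SimpleGraph (Fin m)) x y)) k
        = k * (n + m) + 1) ∧
    (¬ (Odd k ∧ n % 2 = (m + 1) % 2) →
      ktdn (inflation (joinByEdge (⊤ : SimpleGraph (Fin n)) (⊤ : SimpleGraph (Fin m)) x y)) k
        = k * (n + m)) := by
  have : Nontrivial (Fin n) := Fin.nontrivial_iff_two_le.mpr (by omega)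
  have : Nontrivial (Fin m) := Fin.nontrivial_iff_two_le.mpr (by omega)
  obtain ⟨H, hHF, hdeg, hsum⟩ := exists_le_joinByEdge_top (k := k)
    (by simpa using hkn) (by simpa using hkn.trans_le hnm) x y
  have hγ := ktdn_inflation_eq hk exists_adj_joinByEdge_top hHF hdeg hsum
  have hpar : Odd k ∧ n % 2 = (m + 1) % 2 ↔ k * (n + m) % 2 = 1 := by
    rw [← Nat.odd_iff, Nat.odd_mul, Nat.odd_iff (n := n + m)]
    exact and_congr_right fun _ => by omega
  simp only [Fintype.card_sum, Fintype.card_fin] at hγ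
  rw [hγ, hpar]
  constructor <;> intro h <;> omega
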